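/- For all a ≥ 2, b ≥ 0, c ≥ 2, the Toads and Frogs position L T^a □ F (TF)^b T F^c R (with L any {T,F}-string ending in F, R any {T,F}-string starting with T) has game value { { a−2 | O^{b+1}( L T^{a−1} F (TF)^{b+1} T □ F^{c−1} R ) } | 0 }, where O(x) = {0 | x}. -/

import Mathlib

universe u

/-- Pre-games (removed from Mathlib; restored with the old definition). -/
inductive SetTheory.PGame : Type (u + 1)
  | mk : ∀ α β : Type u, (α → SetTheory.PGame) → (β → SetTheory.PGame) → SetTheory.PGame

namespace SetTheory.PGame

instance : Zero PGame :=
  ⟨⟨PEmpty, PEmpty, PEmpty.elim, PEmpty.elim⟩⟩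

/-- Negation of pre-games. -/
def neg : PGame → PGame
  | ⟨l, r, L, R⟩ => ⟨r, l, fun i => neg (R i), fun i => neg (L i)⟩

instance : Neg PGame :=
  ⟨neg⟩

/-- The pair (`x ≤ y`, `x ⧏ y`), defined by simultaneous recursion. -/
noncomputable def leLF (x : PGame) : PGame → Prop × Prop :=
  PGame.rec (motive := fun _ => PGame → Prop × Prop)
    (fun xl xr xL xR ihL ihR y =>
      PGame.rec (motive := fun _ => Prop × Prop)
        (fun yl yr yL yR jL jR =>
          ((∀ i, (ihL i (mk yl yr yL yR)).2) ∧ ∀ j, (jR j).2,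
           (∃ i, (jL i).1) ∨ ∃ j, (ihR j (mk yl yr yL yR)).1)) y) x

noncomputable instance : LE PGame :=
  ⟨fun x y => (leLF x y).1⟩

/-- Equivalence of pre-games: `x ≤ y ∧ y ≤ x`. -/
def Equiv (x y : PGame) : Prop :=
  x ≤ y ∧ y ≤ x

instance : HasEquiv PGame :=
  ⟨Equiv⟩

end SetTheory.PGame

open SetTheory

inductive Cell : Type
  | T | F | E
deriving DecidableEq

/-- Positions reachable from `l` by a single Toad (Left) move:
a Toad steps right into an empty square, or jumps over one adjacent Frog
into the empty square beyond. -/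
def toadMoves : List Cell → List (List Cell)
  | [] => []
  | c :: rest =>
    (match c, rest with
     | Cell.T, Cell.E :: r => [Cell.E :: Cell.T :: r]
     | Cell.T, Cell.F :: Cell.E :: r => [Cell.E :: Cell.F :: Cell.T :: r]
     | _, _ => []) ++ (toadMoves rest).map (c :: ·)

/-- Positions reachable from `l` by a single Frog (Right) move. -/
def frogMoves : List Cell → List (List Cell)
  | [] => []
  | c :: rest =>
    (match c, rest with
     | Cell.E, Cell.F :: r => [Cell.F :: Cell.E :: r]
     | Cell.E, Cell.T :: Cell.F :: r => [Cell.F :: Cell.T :: Cell.E :: r]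
     | _, _ => []) ++ (frogMoves rest).map (c :: ·)

/-- A weight which strictly decreases with every legal move: each Toad
contributes the number of squares strictly to its right, each Frog the number
of squares strictly to its left. -/
def wt : List Cell → ℕ
  | [] => 0
  | c :: rest =>
    (if c = Cell.T then rest.length else 0) + rest.countP (· = Cell.F) + wt rest

/-- Game tree with fuel; since `wt` strictly decreases along moves and
positions of weight `0` have no moves, `gameAux n l` is the true game
tree of `l` whenever `wt l ≤ n`. -/
def gameAux : ℕ → List Cell → PGame
  | 0, _ => 0
  | n + 1, l =>
    PGame.mk {m // m ∈ toadMoves l} {m // m ∈ frogMoves l}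
      (fun m => gameAux n m.1) (fun m => gameAux n m.1)

/-- The game (PGame) associated to a Toads and Frogs position. -/
def tfGame (l : List Cell) : PGame := gameAux (wt l + 1) l

/-- The game `{x | y}` with a single Left option `x` and single Right option `y`. -/
def gmk (x y : PGame) : PGame :=
  PGame.mk PUnit PUnit (fun _ => x) (fun _ => y)

/-- The canonical game of a natural number. -/
def natGame : ℕ → PGame
  | 0 => 0
  | n + 1 => PGame.mk PUnit PEmpty (fun _ => natGame n) (fun x => x.elim)

/-- The canonical game of an integer. -/
def intGame : ℤ → PGame
  | Int.ofNat n => natGame n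
  | Int.negSucc n => -natGame (n + 1)

/-- `(TF)^b` : the block `TF` repeated `b` times. -/
def tfBlock (b : ℕ) : List Cell := (List.replicate b [Cell.T, Cell.F]).flatten


/-!
Left's only move slides the last toad of `T^a` into the blank; Right's only move slides the frog
into it and leaves a position in which nobody can slide into the blank, of value `0` by the Death
Leap Principle. After Left's slide, Left can slide again, to `L T^(a-2) □ T T F ⋯`, where Right
has no move and each of Left's `a - 2` slides leads to a position of the same kind, down to a dead
one: the integer `a - 2`. Or Right jumps, and from then on Right's jumps carry the blank through
`(TF)^(b+1)` while every Left slide into the blank is again dead, which builds the `b + 1` layers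
of `O`.
-/

namespace SetTheory.PGame

def LeftMoves : PGame.{u} → Type u
  | mk l _ _ _ => l

def RightMoves : PGame.{u} → Type u
  | mk _ r _ _ => r

def moveLeft : (x : PGame) → LeftMoves x → PGame
  | mk _ _ L _ => L

def moveRight : (x : PGame) → RightMoves x → PGame
  | mk _ _ _ R => R

def LF (x y : PGame.{u}) : Prop :=
  (leLF x y).2

infix:50 " ⧏ " => LF

theorem le_iff_forall_lf {x y : PGame} :
    x ≤ y ↔ (∀ i, x.moveLeft i ⧏ y) ∧ ∀ j, x ⧏ y.moveRight j := by
  cases x; cases y; exact Iff.rfl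

theorem lf_iff_exists_le {x y : PGame} :
    x ⧏ y ↔ (∃ i, x ≤ y.moveLeft i) ∨ ∃ j, x.moveRight j ≤ y := by
  cases x; cases y; exact Iff.rfl

protected theorem le_refl : ∀ x : PGame, x ≤ x
  | mk _ _ L R => le_iff_forall_lf.2
    ⟨fun i => lf_iff_exists_le.2 (.inl ⟨i, PGame.le_refl (L i)⟩),
      fun j => lf_iff_exists_le.2 (.inr ⟨j, PGame.le_refl (R j)⟩)⟩

protected theorem Equiv.refl (x : PGame) : x ≈ x :=
  ⟨PGame.le_refl x, PGame.le_refl x⟩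

theorem Equiv.of_exists {x y : PGame}
    (hl₁ : ∀ i, ∃ j, x.moveLeft i ≈ y.moveLeft j)
    (hr₁ : ∀ i, ∃ j, x.moveRight i ≈ y.moveRight j)
    (hl₂ : ∀ j, ∃ i, x.moveLeft i ≈ y.moveLeft j)
    (hr₂ : ∀ j, ∃ i, x.moveRight i ≈ y.moveRight j) :
    x ≈ y := by
  constructor <;> refine le_iff_forall_lf.2 ⟨fun i => lf_iff_exists_le.2 ?_,
    fun j => lf_iff_exists_le.2 ?_⟩
  · obtain ⟨j, h⟩ := hl₁ i; exact .inl ⟨j, h.1⟩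
  · obtain ⟨i, h⟩ := hr₂ j; exact .inr ⟨i, h.1⟩
  · obtain ⟨j, h⟩ := hl₂ i; exact .inl ⟨j, h.2⟩
  · obtain ⟨i, h⟩ := hr₁ j; exact .inr ⟨i, h.2⟩

theorem le_zero {x : PGame} : x ≤ 0 ↔ ∀ i, ∃ j, (x.moveLeft i).moveRight j ≤ 0 := by
  refine le_iff_forall_lf.trans ⟨fun h i => ?_, fun h => ⟨fun i => ?_, nofun⟩⟩
  · rcases lf_iff_exists_le.1 (h.1 i) with ⟨⟨⟩, _⟩ | h'
    exact h'
  · exact lf_iff_exists_le.2 (.inr (h i))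

theorem zero_le {x : PGame} : 0 ≤ x ↔ ∀ j, ∃ i, 0 ≤ (x.moveRight j).moveLeft i := by
  refine le_iff_forall_lf.trans ⟨fun h j => ?_, fun h => ⟨nofun, fun j => ?_⟩⟩
  · rcases lf_iff_exists_le.1 (h.2 j) with h' | ⟨⟨⟩, _⟩
    exact h'
  · exact lf_iff_exists_le.2 (.inl (h j))

end SetTheory.PGame

open Cell

theorem mem_toadMoves_cons {c : Cell} {r m : List Cell} :
    m ∈ toadMoves (c :: r) ↔
      (c = T ∧ ∃ q, r = E :: q ∧ m = E :: T :: q) ∨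
      (c = T ∧ ∃ q, r = F :: E :: q ∧ m = E :: F :: T :: q) ∨
      ∃ m' ∈ toadMoves r, m = c :: m' := by
  rw [toadMoves.eq_def]
  rcases c with _ | _ | _ <;> rcases r with _ | ⟨_ | _ | _, _ | ⟨_ | _ | _, _⟩⟩ <;>
    simp [eq_comm]

theorem mem_toadMoves {l m : List Cell} :
    m ∈ toadMoves l ↔ ∃ p q, (l = p ++ T :: E :: q ∧ m = p ++ E :: T :: q) ∨
      (l = p ++ T :: F :: E :: q ∧ m = p ++ E :: F :: T :: q) := by
  induction l generalizing m with
  | nil => simp [toadMoves]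
  | cons c r ih =>
    rw [mem_toadMoves_cons]
    simp only [ih]
    constructor
    · rintro (⟨rfl, q, rfl, rfl⟩ | ⟨rfl, q, rfl, rfl⟩ |
        ⟨m', ⟨p, q, ⟨rfl, rfl⟩ | ⟨rfl, rfl⟩⟩, rfl⟩)
      · exact ⟨[], q, .inl ⟨rfl, rfl⟩⟩
      · exact ⟨[], q, .inr ⟨rfl, rfl⟩⟩
      · exact ⟨c :: p, q, .inl ⟨rfl, rfl⟩⟩
      · exact ⟨c :: p, q, .inr ⟨rfl, rfl⟩⟩
    · rintro ⟨_ | ⟨d, p⟩, q, ⟨hl, rfl⟩ | ⟨hl, rfl⟩⟩ <;>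
        simp only [List.nil_append, List.cons_append, List.cons.injEq] at hl <;>
        obtain ⟨rfl, rfl⟩ := hl
      · exact .inl ⟨rfl, q, rfl, rfl⟩
      · exact .inr (.inl ⟨rfl, q, rfl, rfl⟩)
      · exact .inr (.inr ⟨_, ⟨p, q, .inl ⟨rfl, rfl⟩⟩, rfl⟩)
      · exact .inr (.inr ⟨_, ⟨p, q, .inr ⟨rfl, rfl⟩⟩, rfl⟩)

theorem mem_frogMoves_cons {c : Cell} {r m : List Cell} :
    m ∈ frogMoves (c :: r) ↔
      (c = E ∧ ∃ q, r = F :: q ∧ m = F :: E :: q) ∨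
      (c = E ∧ ∃ q, r = T :: F :: q ∧ m = F :: T :: E :: q) ∨
      ∃ m' ∈ frogMoves r, m = c :: m' := by
  rw [frogMoves.eq_def]
  rcases c with _ | _ | _ <;> rcases r with _ | ⟨_ | _ | _, _ | ⟨_ | _ | _, _⟩⟩ <;>
    simp [eq_comm]

theorem mem_frogMoves {l m : List Cell} :
    m ∈ frogMoves l ↔ ∃ p q, (l = p ++ E :: F :: q ∧ m = p ++ F :: E :: q) ∨
      (l = p ++ E :: T :: F :: q ∧ m = p ++ F :: T :: E :: q) := by
  induction l generalizing m with
  | nil => simp [frogMoves]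
  | cons c r ih =>
    rw [mem_frogMoves_cons]
    simp only [ih]
    constructor
    · rintro (⟨rfl, q, rfl, rfl⟩ | ⟨rfl, q, rfl, rfl⟩ |
        ⟨m', ⟨p, q, ⟨rfl, rfl⟩ | ⟨rfl, rfl⟩⟩, rfl⟩)
      · exact ⟨[], q, .inl ⟨rfl, rfl⟩⟩
      · exact ⟨[], q, .inr ⟨rfl, rfl⟩⟩
      · exact ⟨c :: p, q, .inl ⟨rfl, rfl⟩⟩
      · exact ⟨c :: p, q, .inr ⟨rfl, rfl⟩⟩
    · rintro ⟨_ | ⟨d, p⟩, q, ⟨hl, rfl⟩ | ⟨hl, rfl⟩⟩ <;>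
        simp only [List.nil_append, List.cons_append, List.cons.injEq] at hl <;>
        obtain ⟨rfl, rfl⟩ := hl
      · exact .inl ⟨rfl, q, rfl, rfl⟩
      · exact .inr (.inl ⟨rfl, q, rfl, rfl⟩)
      · exact .inr (.inr ⟨_, ⟨p, q, .inl ⟨rfl, rfl⟩⟩, rfl⟩)
      · exact .inr (.inr ⟨_, ⟨p, q, .inr ⟨rfl, rfl⟩⟩, rfl⟩)

theorem wt_append (p s : List Cell) :
    wt (p ++ s) = wt p + wt s + p.countP (· = T) * s.length + p.length * s.countP (· = F) := by
  induction p with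
  | nil => simp [wt]
  | cons c p ih =>
    simp only [List.cons_append, wt, ih, List.length_append, List.countP_append, List.countP_cons,
      List.length_cons]
    split_ifs <;> simp_all <;> ring

theorem wt_lt_of_mem_toadMoves {l m : List Cell} (h : m ∈ toadMoves l) : wt m < wt l := by
  obtain ⟨p, q, ⟨rfl, rfl⟩ | ⟨rfl, rfl⟩⟩ := mem_toadMoves.1 h <;>
    simp [wt_append, wt] <;> omega

theorem wt_lt_of_mem_frogMoves {l m : List Cell} (h : m ∈ frogMoves l) : wt m < wt l := by
  obtain ⟨p, q, ⟨rfl, rfl⟩ | ⟨rfl, rfl⟩⟩ := mem_frogMoves.1 h <;>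
    simp [wt_append, wt]
  omega

theorem gameAux_eq_tfGame {n : ℕ} {l : List Cell} (h : wt l < n) : gameAux n l = tfGame l := by
  induction n using Nat.strong_induction_on generalizing l with
  | _ n ih =>
    obtain ⟨n, rfl⟩ : ∃ k, n = k + 1 := ⟨n - 1, by omega⟩
    rw [tfGame, gameAux, gameAux]
    congr 1 <;> funext m
    · have := wt_lt_of_mem_toadMoves m.2
      rw [ih n (by omega) (by omega), ih (wt l) (by omega) this]
    · have := wt_lt_of_mem_frogMoves m.2
      rw [ih n (by omega) (by omega), ih (wt l) (by omega) this]

theorem tfGame_eq (l : List Cell) :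
    tfGame l = PGame.mk {m // m ∈ toadMoves l} {m // m ∈ frogMoves l}
      (fun m => tfGame m.1) (fun m => tfGame m.1) := by
  rw [tfGame, gameAux]
  congr 1 <;> funext m
  · exact gameAux_eq_tfGame (wt_lt_of_mem_toadMoves m.2)
  · exact gameAux_eq_tfGame (wt_lt_of_mem_frogMoves m.2)

theorem mem_toadMoves_append_E {u v m : List Cell} (hu : E ∉ u) (hv : E ∉ v) :
    m ∈ toadMoves (u ++ E :: v) ↔ (∃ p, u = p ++ [T] ∧ m = p ++ E :: T :: v) ∨
      ∃ p, u = p ++ [T, F] ∧ m = p ++ E :: F :: T :: v := by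
  have slide (p q : List Cell) : p ++ T :: E :: q = (p ++ [T]) ++ E :: q := by simp
  have jump (p q : List Cell) : p ++ T :: F :: E :: q = (p ++ [T, F]) ++ E :: q := by simp
  simp only [mem_toadMoves, slide, jump, List.append_cons_inj_of_notMem hu hv]
  aesop

theorem mem_frogMoves_append_E {u v m : List Cell} (hu : E ∉ u) (hv : E ∉ v) :
    m ∈ frogMoves (u ++ E :: v) ↔ (∃ w, v = F :: w ∧ m = u ++ F :: E :: w) ∨
      ∃ w, v = T :: F :: w ∧ m = u ++ F :: T :: E :: w := by
  simp only [mem_frogMoves, List.append_cons_inj_of_notMem hu hv]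
  aesop

theorem mem_toadMoves_slide {p v m : List Cell} (hp : E ∉ p) (hv : E ∉ v) :
    m ∈ toadMoves (p ++ T :: E :: v) ↔ m = p ++ E :: T :: v := by
  rw [show p ++ T :: E :: v = (p ++ [T]) ++ E :: v by simp,
    mem_toadMoves_append_E (by simpa using hp) hv]
  have (x : List Cell) : p ++ [T] ≠ x ++ [T, F] := fun h => by
    simpa using congrArg List.getLast? h
  simp [this]

theorem mem_frogMoves_slide {u v m : List Cell} (hu : E ∉ u) (hv : E ∉ v) :
    m ∈ frogMoves (u ++ E :: F :: v) ↔ m = u ++ F :: E :: v := by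
  rw [mem_frogMoves_append_E hu (by simpa using hv)]
  simp

theorem mem_frogMoves_jump {u v m : List Cell} (hu : E ∉ u) (hv : E ∉ v) :
    m ∈ frogMoves (u ++ E :: T :: F :: v) ↔ m = u ++ F :: T :: E :: v := by
  rw [mem_frogMoves_append_E hu (by simpa using hv)]
  simp

theorem exists_moveLeft_tfGame {l : List Cell} {P : PGame → Prop} :
    (∃ i, P ((tfGame l).moveLeft i)) ↔ ∃ m ∈ toadMoves l, P (tfGame m) := by
  rw [tfGame_eq]
  exact ⟨fun ⟨i, h⟩ => ⟨i.1, i.2, h⟩, fun ⟨m, hm, h⟩ => ⟨⟨m, hm⟩, h⟩⟩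

theorem exists_moveRight_tfGame {l : List Cell} {P : PGame → Prop} :
    (∃ j, P ((tfGame l).moveRight j)) ↔ ∃ m ∈ frogMoves l, P (tfGame m) := by
  rw [tfGame_eq]
  exact ⟨fun ⟨j, h⟩ => ⟨j.1, j.2, h⟩, fun ⟨m, hm, h⟩ => ⟨⟨m, hm⟩, h⟩⟩

theorem tfGame_le_zero {l : List Cell} :
    tfGame l ≤ 0 ↔ ∀ m ∈ toadMoves l, ∃ m' ∈ frogMoves m, tfGame m' ≤ 0 := by
  rw [PGame.le_zero, tfGame_eq l]
  exact ⟨fun h m hm => (exists_moveRight_tfGame (P := (· ≤ 0))).1 (h ⟨m, hm⟩),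
    fun h i => (exists_moveRight_tfGame (P := (· ≤ 0))).2 (h i.1 i.2)⟩

theorem zero_le_tfGame {l : List Cell} :
    0 ≤ tfGame l ↔ ∀ m ∈ frogMoves l, ∃ m' ∈ toadMoves m, 0 ≤ tfGame m' := by
  rw [PGame.zero_le, tfGame_eq l]
  exact ⟨fun h m hm => (exists_moveLeft_tfGame (P := (0 ≤ ·))).1 (h ⟨m, hm⟩),
    fun h j => (exists_moveLeft_tfGame (P := (0 ≤ ·))).2 (h j.1 j.2)⟩

theorem tfGame_equiv {l : List Cell} {G : PGame}
    (hl₁ : ∀ m ∈ toadMoves l, ∃ i, tfGame m ≈ G.moveLeft i)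
    (hr₁ : ∀ m ∈ frogMoves l, ∃ j, tfGame m ≈ G.moveRight j)
    (hl₂ : ∀ i, ∃ m ∈ toadMoves l, tfGame m ≈ G.moveLeft i)
    (hr₂ : ∀ j, ∃ m ∈ frogMoves l, tfGame m ≈ G.moveRight j) : tfGame l ≈ G := by
  rw [tfGame_eq]
  refine PGame.Equiv.of_exists (fun i => hl₁ i.1 i.2) (fun j => hr₁ j.1 j.2) (fun i => ?_)
    (fun j => ?_)
  · obtain ⟨m, hm, h⟩ := hl₂ i
    exact ⟨⟨m, hm⟩, h⟩
  · obtain ⟨m, hm, h⟩ := hr₂ j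
    exact ⟨⟨m, hm⟩, h⟩

theorem tfGame_equiv_gmk {l x y : List Cell} {X Y : PGame}
    (hT : ∀ m, m ∈ toadMoves l ↔ m = x) (hF : ∀ m, m ∈ frogMoves l ↔ m = y)
    (hX : tfGame x ≈ X) (hY : tfGame y ≈ Y) : tfGame l ≈ gmk X Y := by
  refine tfGame_equiv ?_ ?_ ?_ ?_ <;> simp only [hT, hF, forall_eq, exists_eq_left]
  exacts [⟨⟨⟩, hX⟩, ⟨⟨⟩, hY⟩, fun _ => hX, fun _ => hY]

/-- The Death Leap Principle: a jump over the blank is answered by the opponent's slide into the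
square it vacated, which leaves a position of the same kind. -/
theorem tfGame_equiv_zero_of_no_slide {u v : List Cell} (hu : E ∉ u) (hv : E ∉ v)
    (hu' : u.getLast? ≠ some T) (hv' : v.head? ≠ some F) : tfGame (u ++ E :: v) ≈ 0 := by
  induction h : wt (u ++ E :: v) using Nat.strong_induction_on generalizing u v with
  | _ n ih =>
    constructor
    · rw [tfGame_le_zero]
      intro m hm
      obtain ⟨p, rfl, rfl⟩ | ⟨p, rfl, rfl⟩ := (mem_toadMoves_append_E hu hv).1 hm
      · simp at hu'
      have hm' : (p ++ [F]) ++ E :: T :: v ∈ frogMoves (p ++ E :: F :: T :: v) :=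
        mem_frogMoves.2 ⟨p, T :: v, .inl ⟨rfl, by simp⟩⟩
      refine ⟨_, hm', (ih _ ?_ (by simp_all) (by simpa using hv) (by simp) (by simp) rfl).1⟩
      have := wt_lt_of_mem_frogMoves hm'
      have := wt_lt_of_mem_toadMoves hm
      omega
    · rw [zero_le_tfGame]
      intro m hm
      obtain ⟨w, rfl, rfl⟩ | ⟨w, rfl, rfl⟩ := (mem_frogMoves_append_E hu hv).1 hm
      · simp at hv'
      have hm' : (u ++ [F]) ++ E :: T :: w ∈ toadMoves (u ++ F :: T :: E :: w) :=
        mem_toadMoves.2 ⟨u ++ [F], w, .inl ⟨by simp, rfl⟩⟩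
      refine ⟨_, hm', (ih _ ?_ (by simpa using hu) (by simp_all) (by simp) (by simp) rfl).2⟩
      have := wt_lt_of_mem_toadMoves hm'
      have := wt_lt_of_mem_frogMoves hm
      omega

theorem tfGame_replicate_T_equiv_natGame {L : List Cell} (hL : E ∉ L)
    (hL' : L.getLast? ≠ some T) (n : ℕ) {w : List Cell} (hw : E ∉ w) :
    tfGame (L ++ List.replicate n T ++ E :: T :: T :: w) ≈ natGame n := by
  induction n generalizing w with
  | zero =>
    simpa [natGame] using tfGame_equiv_zero_of_no_slide hL (by simpa using hw) hL' (by simp)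
  | succ n ih =>
    have hu : E ∉ L ++ List.replicate n T := by simp [hL, List.mem_replicate]
    have hv : E ∉ T :: T :: w := by simpa using hw
    have htoad (m) := mem_toadMoves_slide (m := m) hu hv
    have hfrog (m) : m ∉ frogMoves (L ++ List.replicate n T ++ T :: E :: T :: T :: w) := by
      rw [show L ++ List.replicate n T ++ T :: E :: T :: T :: w =
        (L ++ List.replicate n T ++ [T]) ++ E :: T :: T :: w by simp,
        mem_frogMoves_append_E (by simpa using hu) hv]
      simp
    rw [show L ++ List.replicate (n + 1) T ++ E :: T :: T :: w =
      L ++ List.replicate n T ++ T :: E :: T :: T :: w by simp [List.replicate_succ']]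
    refine tfGame_equiv ?_ (fun m hm => absurd hm (hfrog m)) ?_ (fun j => j.elim)
    · intro m hm
      exact ⟨⟨⟩, (htoad m).1 hm ▸ ih (by simpa using hw)⟩
    · exact fun _ => ⟨_, (htoad _).2 rfl, ih (by simpa using hw)⟩

theorem tfBlock_succ (n : ℕ) : tfBlock (n + 1) = T :: F :: tfBlock n := by
  simp [tfBlock, List.replicate_succ]

theorem tfBlock_succ' (n : ℕ) : tfBlock (n + 1) = tfBlock n ++ [T, F] := by
  simp [tfBlock, List.replicate_succ']

theorem E_notMem_tfBlock (n : ℕ) : E ∉ tfBlock n := by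
  induction n with
  | zero => simp [tfBlock]
  | succ n ih => simp [tfBlock_succ, ih]

/-- Every Left slide is a dead position, of value `0`, and every Right jump moves the blank past one
more `TF`. -/
theorem tfGame_T_E_tfBlock_equiv {P : List Cell} (hP : E ∉ P) (hP' : P.getLast? ≠ some T)
    (n : ℕ) {w : List Cell} (hw : E ∉ w) :
    tfGame (P ++ T :: E :: (tfBlock n ++ w)) ≈
      (fun x => gmk 0 x)^[n] (tfGame (P ++ tfBlock n ++ T :: E :: w)) := by
  induction n generalizing P with
  | zero => simpa [tfBlock] using PGame.Equiv.refl _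
  | succ n ih =>
    have hv : E ∉ T :: F :: (tfBlock n ++ w) := by simp [E_notMem_tfBlock, hw]
    rw [Function.iterate_succ_apply', tfBlock_succ, List.cons_append, List.cons_append]
    refine tfGame_equiv_gmk (y := P ++ [T, F] ++ T :: E :: (tfBlock n ++ w))
      (fun m => mem_toadMoves_slide hP hv) (fun m => ?_)
      (tfGame_equiv_zero_of_no_slide hP (by simpa using hv) hP' (by simp)) ?_
    · simpa using mem_frogMoves_jump (u := P ++ [T]) (m := m) (by simpa using hP)
        (by simpa using hv)
    · simpa using ih (P := P ++ [T, F]) (by simpa using hP) (by simp)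

theorem LTaboxF_TFb_T_Fc_R_general (a b c : ℕ) (ha : 2 ≤ a) (hc : 2 ≤ c)
    (L R : List Cell) (hLE : Cell.E ∉ L) (hRE : Cell.E ∉ R)
    (hL : L.getLast? = some Cell.F) :
    tfGame (L ++ List.replicate a Cell.T ++ [Cell.E, Cell.F] ++ tfBlock b ++
        [Cell.T] ++ List.replicate c Cell.F ++ R) ≈
      gmk
        (gmk (intGame ((a : ℤ) - 2))
          ((fun x => gmk 0 x)^[b + 1]
            (tfGame (L ++ List.replicate (a - 1) Cell.T ++ [Cell.F] ++
              tfBlock (b + 1) ++ [Cell.T, Cell.E] ++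
              List.replicate (c - 1) Cell.F ++ R))))
        0 := by
  obtain ⟨n, rfl⟩ : ∃ n, a = n + 2 := ⟨a - 2, by omega⟩
  obtain ⟨c, rfl⟩ : ∃ c', c = c' + 1 := ⟨c - 1, by omega⟩
  set u := L ++ List.replicate n T
  set w := List.replicate c F ++ R
  set v := tfBlock b ++ T :: F :: w
  have hu : E ∉ u := by simp [u, hLE, List.mem_replicate]
  have hw : E ∉ w := by simp [w, hRE, List.mem_replicate]
  have hv : E ∉ v := by simp [v, hw, E_notMem_tfBlock]
  have hn : ((n + 2 : ℕ) : ℤ) - 2 = n := by omega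
  have hG : L ++ List.replicate (n + 2) T ++ [E, F] ++ tfBlock b ++ [T] ++
      List.replicate (c + 1) F ++ R = u ++ T :: T :: E :: F :: v := by
    simp [u, v, w, List.replicate_succ' (a := T), List.replicate_succ (a := F)]
  have hB : L ++ List.replicate (n + 2 - 1) T ++ [F] ++ tfBlock (b + 1) ++ [T, E] ++
      List.replicate (c + 1 - 1) F ++ R = u ++ [T, F] ++ tfBlock (b + 1) ++ T :: E :: w := by
    simp [u, w, List.replicate_succ' (a := T)]
  rw [hn, hG, hB]
  refine tfGame_equiv_gmk
    (fun m => by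
      simpa using mem_toadMoves_slide (p := u ++ [T]) (by simpa using hu) (by simpa using hv))
    (fun m => by simpa using mem_frogMoves_slide (u := u ++ [T, T]) (by simpa using hu) hv) ?_
    (tfGame_equiv_zero_of_no_slide (u := u ++ [T, T, F]) (by simpa using hu) hv (by simp)
      (by cases b <;> simp [v, tfBlock, List.replicate_succ]))
  refine tfGame_equiv_gmk (fun m => mem_toadMoves_slide hu (by simpa using hv))
    (fun m => by simpa using mem_frogMoves_jump (u := u ++ [T]) (by simpa using hu) hv) ?_ ?_
  · exact tfGame_replicate_T_equiv_natGame hLE (by simp [hL]) n (by simpa using hv)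
  · simpa [v, tfBlock_succ'] using
      tfGame_T_E_tfBlock_equiv (P := u ++ [T, F]) (by simpa using hu) (by simp) (b + 1) hw

/-- `L T^a □ F (TF)^b T F^c R
  = { { a-2 | O^(b+1)( L T^(a-1) F (TF)^(b+1) T □ F^(c-1) R ) } | 0 }`
for `a ≥ 2`, `b ≥ 0`, `c ≥ 2`, where `O(x) = {0 | x}`, `L` is a `{T,F}`-string
ending in `F` and `R` a `{T,F}`-string starting with `T`. -/
theorem LTaboxF_TFb_T_Fc_R (a b c : ℕ) (ha : 2 ≤ a) (hc : 2 ≤ c)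
    (L R : List Cell) (hLE : Cell.E ∉ L) (hRE : Cell.E ∉ R)
    (hL : L.getLast? = some Cell.F) (hR : R.head? = some Cell.T) :
    tfGame (L ++ List.replicate a Cell.T ++ [Cell.E, Cell.F] ++ tfBlock b ++
        [Cell.T] ++ List.replicate c Cell.F ++ R) ≈
      gmk
        (gmk (intGame ((a : ℤ) - 2))
          ((fun x => gmk 0 x)^[b + 1]
            (tfGame (L ++ List.replicate (a - 1) Cell.T ++ [Cell.F] ++
              tfBlock (b + 1) ++ [Cell.T, Cell.E] ++
              List.replicate (c - 1) Cell.F ++ R))))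
        0 :=
  LTaboxF_TFb_T_Fc_R_general a b c ha hc L R hLE hRE hL
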